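/- In the de Bruijn graph of span n with maximal vertex m, define g(u) as the longest word that is both a prefix of m and a suffix of u, and α(u) = m_{|g(u)|+1}. Then for every arc (u,v) with label l(uv): (i) l(uv) ≤ α(u); (ii) if l(uv) < α(u) then g(v) is the empty word; (iii) if l(uv) = α(u) then g(v) = g(u)·l(uv). -/

import Mathlib

/-!
Let `v = u.tail ++ [b]`. Since `g u` is a proper suffix of `u`, `g u ++ [b]` is a suffix of `v`,
hence a prefix of some vertex; comparing it with the prefix `g u ++ [α u]` of the maximal `m`
gives `b ≤ α u`. A nonempty `g v` has the form `s ++ [b]` with `s` a suffix of `g u`, so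
`|g v| ≤ |g u| + 1`, and when `b = α u` the common word `g u ++ [b]` attains this bound. If
`b < α u`, such an `s` would make `s ++ [α u]` a factor of `m`, hence a prefix of some vertex
exceeding the prefix `s ++ [b]` of `m`.
-/

namespace List

variable {α : Type*}

theorem le_of_le_of_append_singleton_prefix [LinearOrder α] {l₁ l₂ p : List α} {b c : α}
    (h : l₁ ≤ l₂) (h₁ : p ++ [b] <+: l₁) (h₂ : p ++ [c] <+: l₂) : b ≤ c := by
  obtain ⟨x, rfl⟩ := h₁
  obtain ⟨y, rfl⟩ := h₂
  simp only [append_assoc, singleton_append] at h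
  induction p with
  | nil =>
    rcases h.lt_or_eq with h | h
    · exact head_le_of_lt h
    · exact (cons_eq_cons.mp h).1.le
  | cons a p ih =>
    refine ih ?_
    rcases h.lt_or_eq with h | h
    · exact le_of_lt (lex_cons_iff.mp h)
    · exact (cons_eq_cons.mp h).2.le

def IsLongestPrefixSuffix (m u w : List α) : Prop :=
  w <+: m ∧ w <:+ u ∧ ∀ s : List α, s <+: m → s <:+ u → s.length ≤ w.length

namespace IsLongestPrefixSuffix

variable {m u w s : List α}

theorem suffix_of_prefix_of_suffix (h : IsLongestPrefixSuffix m u w) (hsm : s <+: m)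
    (hsu : s <:+ u) : s <:+ w :=
  suffix_of_suffix_length_le hsu h.2.1 (h.2.2 s hsm hsu)

theorem eq_of_prefix_of_suffix (h : IsLongestPrefixSuffix m u w) (hsm : s <+: m)
    (hsu : s <:+ u) (hlen : w.length ≤ s.length) : w = s :=
  (prefix_of_prefix_length_le h.1 hsm hlen).eq_of_length (le_antisymm hlen (h.2.2 s hsm hsu))

theorem suffix_tail (h : IsLongestPrefixSuffix m u w) (hlen : u.length = m.length)
    (hne : u ≠ m) : w <:+ u.tail := by
  have hw : w.length < u.length := by
    by_contra! hle
    have hum : u <+: m := h.2.1.eq_of_length_le hle ▸ h.1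
    exact hne (hum.eq_of_length hlen)
  exact suffix_of_suffix_length_le h.2.1 (tail_suffix u) (by rw [length_tail]; omega)

theorem exists_eq_concat_of_suffix_concat {t w' : List α} {b : α}
    (h : IsLongestPrefixSuffix m u w) (h' : IsLongestPrefixSuffix m (t ++ [b]) w')
    (ht : t <:+ u) (hw' : w' ≠ []) : ∃ s, w' = s ++ [b] ∧ s <:+ w := by
  obtain hnil | ⟨s, rfl, hst⟩ := suffix_concat_iff.mp h'.2.1
  · exact absurd hnil hw'
  · exact ⟨s, rfl, h.suffix_of_prefix_of_suffix ((prefix_append s [b]).trans h'.1) (hst.trans ht)⟩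

end IsLongestPrefixSuffix

end List

open List

theorem le_of_infix_vertex_of_prefix_max {A : Type*} [LinearOrder A] {V : Set (List A)}
    {m : List A}
    (hext : ∀ x ∈ V, ∀ s : List A, s <:+ x → ∃ y ∈ V, s <+: y) (hmax : ∀ u ∈ V, u ≤ m)
    {x p : List A} {b c : A} (hx : x ∈ V) (hpx : p ++ [b] <:+: x) (hpm : p ++ [c] <+: m) :
    b ≤ c := by
  obtain ⟨r, t, rfl⟩ := hpx
  obtain ⟨y, hy, hpy⟩ := hext _ hx (p ++ [b] ++ t) <| by
    rw [append_assoc r]; exact suffix_append r _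
  exact le_of_le_of_append_singleton_prefix (hmax y hy) ((prefix_append _ t).trans hpy) hpm

theorem deBruijn_height_lemma {A : Type*} [LinearOrder A] (n : ℕ)
    (L V : Set (List A)) (m : List A) (g : List A → List A) (α : List A → A)
    -- vertices are words of length n
    (hV : ∀ u ∈ V, u.length = n)
    -- heads of arcs are vertices
    (harc : ∀ u ∈ V, ∀ b : A, u ++ [b] ∈ L → u.tail ++ [b] ∈ V)
    -- every suffix of a vertex is a prefix of some vertex
    (hext : ∀ x ∈ V, ∀ s : List A, s <:+ x → ∃ y ∈ V, s <+: y)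
    -- m is the lexicographically maximal vertex
    (hm : m ∈ V)
    (hmax : ∀ u ∈ V, u = m ∨ List.Lex (· < ·) u m)
    -- g u is the longest common prefix-of-m / suffix-of-u word
    (hg : ∀ u ∈ V, g u <+: m ∧ g u <:+ u ∧
      ∀ s : List A, s <+: m → s <:+ u → s.length ≤ (g u).length)
    -- α u is the letter of m following g u
    (hα : ∀ u ∈ V, u ≠ m → g u ++ [α u] <+: m) :
    ∀ u ∈ V, u ≠ m → ∀ b : A, u ++ [b] ∈ L →
      b ≤ α u ∧
      (b < α u → g (u.tail ++ [b]) = []) ∧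
      (b = α u → g (u.tail ++ [b]) = g u ++ [b]) := by
  intro u hu hum b hb
  have hle_max : ∀ u ∈ V, u ≤ m := fun u hu => le_iff_eq_or_lt.mpr (hmax u hu)
  have hv : u.tail ++ [b] ∈ V := harc u hu b hb
  have hgu : IsLongestPrefixSuffix m u (g u) := hg u hu
  have hgv : IsLongestPrefixSuffix m (u.tail ++ [b]) (g (u.tail ++ [b])) := hg _ hv
  have hgu_tail : g u <:+ u.tail := hgu.suffix_tail (by rw [hV u hu, hV m hm]) hum
  have hgub : g u ++ [b] <:+ u.tail ++ [b] := suffix_append_self_iff.mpr hgu_tail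
  refine ⟨le_of_infix_vertex_of_prefix_max hext hle_max hv hgub.isInfix (hα u hu hum), ?_, ?_⟩
  · intro hlt
    by_contra hne
    obtain ⟨s, hs, hsg⟩ := hgu.exists_eq_concat_of_suffix_concat hgv (tail_suffix u) hne
    have hsα : s ++ [α u] <:+: m :=
      (suffix_append_self_iff.mpr hsg).isInfix.trans (hα u hu hum).isInfix
    exact hlt.not_ge (le_of_infix_vertex_of_prefix_max hext hle_max hm hsα (hs ▸ hgv.1))
  · rintro rfl
    refine hgv.eq_of_prefix_of_suffix (hα u hu hum) hgub ?_
    rcases eq_or_ne (g (u.tail ++ [α u])) [] with hnil | hne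
    · simp [hnil]
    · obtain ⟨s, hs, hsg⟩ := hgu.exists_eq_concat_of_suffix_concat hgv (tail_suffix u) hne
      simpa [hs] using hsg.length_le
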